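/- For every positive integer n, the number of semistandard Young tableaux of shape λ_n = (n, n−1, n−1, …, 2, 2, 1, 1) with entries from {1,…,2n+1} equals 3^{n(n−1)/2} · ∏_{i=0}^{n} (3i)!/(n+i)!; equivalently, |SSYT_{λ_n}(2n+1)| · ∏_{i=0}^{n} (n+i)! = 3^{n(n−1)/2} · ∏_{i=0}^{n} (3i)!. -/

import Mathlib

/-!
Peeling off the entries equal to `k + 1` from a semistandard tableau with entries `≤ k + 1`
leaves one with entries `≤ k` on a shape `ν` such that `μ / ν` is a horizontal strip; in the
strictly increasing coordinates `l i = i + μ.rowLen (k - 1 - i)` this is the interlacing of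
Gelfand–Tsetlin patterns. The Vandermonde determinant `Δ` satisfies `k! · ∑ Δ(m) = Δ(l)`, the
sum running over the interlacing box of `l`, because by Faulhaber's formula the row sums of
powers are differences of Bernoulli polynomials, which are monic. By induction
`(∏_{t<k} t!) · #SSYT_μ(k) = Δ(l)`, which is Weyl's dimension formula. For `λ_n` and
`k = 2n + 1` the coordinates `l` are `0, 1, 3, 4, …, 3n`, the numbers up to `3n` not congruent
to `2` mod `3`, and the product of their differences telescopes to
`3^(n(n-1)/2) · ∏_{a<n} a! · ∏_{i≤n} (3i)!`.
-/

/-- The Young diagram of the partition `(n, n-1, n-1, ..., 2, 2, 1, 1)` (of length `2n-1`,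
with first part `n` and with parts `2j` and `2j+1` both equal to `n-j` for `j = 1, …, n-1`):
row `i` (0-based) has length `n - (i+1)/2`. -/
def lambdaShape (n : ℕ) : YoungDiagram where
  cells := (Finset.range (2*n) ×ˢ Finset.range n).filter fun p => p.2 < n - (p.1 + 1) / 2
  isLowerSet := by
    intro a b hba ha
    have h1 : b.1 ≤ a.1 := (Prod.le_def.mp hba).1
    have h2 : b.2 ≤ a.2 := (Prod.le_def.mp hba).2
    simp only [Finset.mem_coe, Finset.mem_filter, Finset.mem_product, Finset.mem_range] at ha ⊢
    have hd : (b.1 + 1) / 2 ≤ (a.1 + 1) / 2 := Nat.div_le_div_right (by omega)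
    omega
/-- The set of semistandard Young tableaux of shape `μ` with entries from `{1, …, k}`. -/
def ssytSet (μ : YoungDiagram) (k : ℕ) : Set (SemistandardYoungTableau μ) :=
  {T | ∀ i j, (i, j) ∈ μ → 1 ≤ T i j ∧ T i j ≤ k}

/-- The number of semistandard Young tableaux of shape `μ` with entries from `{1, …, k}`. -/
noncomputable def ssytCount (μ : YoungDiagram) (k : ℕ) : ℕ := (ssytSet μ k).ncard

open Finset Polynomial Matrix

namespace Polynomial

theorem natDegree_bernoulli (n : ℕ) : (bernoulli n).natDegree = n := by
  refine natDegree_eq_of_le_of_coeff_ne_zero ?_ (by simp [coeff_bernoulli])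
  exact natDegree_le_iff_coeff_eq_zero.mpr fun i hi => by
    simp [coeff_bernoulli, not_le.mpr hi]

theorem bernoulli_monic (n : ℕ) : (bernoulli n).Monic := by
  rw [Monic, leadingCoeff, natDegree_bernoulli]
  simp [coeff_bernoulli]

theorem bernoulli_succ_eval_sub_eval {a b : ℕ} (hab : a ≤ b) (p : ℕ) :
    (bernoulli (p + 1)).eval (b : ℚ) - (bernoulli (p + 1)).eval (a : ℚ) =
      (p + 1) * ∑ x ∈ Ico a b, (x : ℚ) ^ p := by
  rw [bernoulli_succ_eval, bernoulli_succ_eval, sum_Ico_eq_sub _ hab]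
  ring

end Polynomial

namespace Matrix

variable {R : Type*} [CommRing R]

theorem sum_det_of_piFinset {n α : Type*} [DecidableEq n] [Fintype n] (s : n → Finset α)
    (f : α → n → R) :
    ∑ m ∈ Fintype.piFinset s, det (of fun i j => f (m i) j) =
      det (of fun i j => ∑ x ∈ s i, f x j) := by
  have h := (detRowAlternating (R := R) (n := n)).toMultilinearMap.map_sum_finset
    (fun _ => f) s
  rw [show (of fun i j => ∑ x ∈ s i, f x j) = fun i => ∑ x ∈ s i, f x from
    funext fun i => (Finset.sum_fn (s i) f).symm]
  exact h.symm

/-- Adjoin the polynomial `1` as column `0`: the matrix `(p j (v i))` then has the Vandermonde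
determinant, and subtracting from each row the one above leaves `(1, 0, …, 0)` in column `0`. -/
theorem det_eval_succ_sub_eval_castSucc {r : ℕ} (v : Fin (r + 1) → R) (p : Fin r → R[X])
    (hdeg : ∀ j, (p j).natDegree = j + 1) (hmonic : ∀ j, (p j).Monic) :
    det (of fun i j => (p j).eval (v i.succ) - (p j).eval (v i.castSucc)) =
      det (vandermonde v) := by
  set q : Fin (r + 1) → R[X] := Fin.cons 1 p
  set M : Matrix (Fin (r + 1)) (Fin (r + 1)) R := of fun i j => (q j).eval (v i)
  set B : Matrix (Fin (r + 1)) (Fin (r + 1)) R :=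
    of fun i => Fin.cases (M 0) (fun i => M i.succ - M i.castSucc) i
  have hM : det (vandermonde v) = det M :=
    det_eval_matrixOfPolynomials_eq_det_vandermonde v q
      (Fin.cases (by simp [q]) fun j => by simp [q, hdeg])
      (Fin.cases (by simp [q]) fun j => by simp [q, hmonic])
  have hMB : det M = det B :=
    det_eq_of_forall_row_eq_smul_add_pred (fun _ => 1) (fun j => rfl)
      (fun i j => by simp [B])
  rw [hM, hMB, det_succ_column_zero, Fin.sum_univ_succ]
  simp [B, M, q, submatrix]

end Matrix

/-- The rows interlacing `l` in a Gelfand–Tsetlin pattern, in the strictly increasing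
coordinates `i + (row length)`. -/
def interlacingBox {r : ℕ} (l : Fin (r + 1) → ℕ) : Finset (Fin r → ℕ) :=
  Fintype.piFinset fun i => Ico (l i.castSucc) (l i.succ)

theorem mem_interlacingBox {r : ℕ} {l : Fin (r + 1) → ℕ} {m : Fin r → ℕ} :
    m ∈ interlacingBox l ↔ ∀ i, l i.castSucc ≤ m i ∧ m i < l i.succ := by
  simp [interlacingBox]

/-- A discrete integral: by Faulhaber's formula each row sum `∑ x ∈ [l i, l (i + 1)), x ^ j` is a
difference of values of the Bernoulli polynomial `B (j + 1) / (j + 1)`. -/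
theorem factorial_mul_sum_det_vandermonde {r : ℕ} {l : Fin (r + 1) → ℕ} (hl : Monotone l) :
    (r.factorial : ℚ) * ∑ m ∈ interlacingBox l, det (vandermonde fun i => (m i : ℚ)) =
      det (vandermonde fun i => (l i : ℚ)) := by
  have hfact : (r.factorial : ℚ) = ∏ j : Fin r, ((j : ℚ) + 1) := by
    rw [← prod_range_add_one_eq_factorial, ← Fin.prod_univ_eq_prod_range]
    push_cast
    rfl
  calc (r.factorial : ℚ) * ∑ m ∈ interlacingBox l, det (vandermonde fun i => (m i : ℚ))
      = (∏ j : Fin r, ((j : ℚ) + 1)) *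
          det (of fun i j : Fin r =>
            ∑ x ∈ Ico (l i.castSucc) (l i.succ), (x : ℚ) ^ (j : ℕ)) := by
        rw [hfact, interlacingBox, ← sum_det_of_piFinset]
        rfl
    _ = det (of fun i j : Fin r => ((j : ℚ) + 1) *
          ∑ x ∈ Ico (l i.castSucc) (l i.succ), (x : ℚ) ^ (j : ℕ)) := (det_mul_row _ _).symm
    _ = det (of fun i j : Fin r =>
          (Polynomial.bernoulli ((j : ℕ) + 1)).eval (l i.succ : ℚ) -
            (Polynomial.bernoulli ((j : ℕ) + 1)).eval (l i.castSucc : ℚ)) := by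
        simp only [bernoulli_succ_eval_sub_eval (hl Fin.castSucc_lt_succ.le)]
    _ = det (vandermonde fun i => (l i : ℚ)) :=
        det_eval_succ_sub_eval_castSucc (fun i => (l i : ℚ)) _
          (fun _ => natDegree_bernoulli _) (fun _ => bernoulli_monic _)

namespace YoungDiagram

theorem ext_of_rowLen {μ ν : YoungDiagram} (h : ∀ i, μ.rowLen i = ν.rowLen i) : μ = ν :=
  SetLike.ext fun ⟨i, _⟩ => by rw [mem_iff_lt_rowLen, mem_iff_lt_rowLen, h]

theorem rowLen_eq_of_forall_mem_iff {μ : YoungDiagram} {i t : ℕ}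
    (h : ∀ j, (i, j) ∈ μ ↔ j < t) : μ.rowLen i = t :=
  eq_of_forall_lt_iff fun j => by rw [← mem_iff_lt_rowLen, h]

theorem rowLen_mono {ν μ : YoungDiagram} (h : ν ≤ μ) (i : ℕ) : ν.rowLen i ≤ μ.rowLen i :=
  le_of_forall_lt fun _ hj => mem_iff_lt_rowLen.mp (h (mem_iff_lt_rowLen.mpr hj))

/-- The skew shape `μ / ν` is a horizontal strip: no two of its cells lie in the same column. -/
def IsHorizontalStrip (ν μ : YoungDiagram) : Prop :=
  ν ≤ μ ∧ ∀ i j, (i + 1, j) ∈ μ → (i, j) ∈ ν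

theorem IsHorizontalStrip.rowLen_le {ν μ : YoungDiagram} (h : IsHorizontalStrip ν μ) (i : ℕ) :
    μ.rowLen (i + 1) ≤ ν.rowLen i ∧ ν.rowLen i ≤ μ.rowLen i :=
  ⟨le_of_forall_lt fun j hj => mem_iff_lt_rowLen.mp (h.2 i j (mem_iff_lt_rowLen.mpr hj)),
    rowLen_mono h.1 i⟩

def shiftedRowLens (k : ℕ) (μ : YoungDiagram) : Fin k → ℕ :=
  fun i => i + μ.rowLen (k - 1 - i)

theorem shiftedRowLens_monotone (k : ℕ) (μ : YoungDiagram) : Monotone (shiftedRowLens k μ) :=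
  fun i j hij => add_le_add hij (μ.rowLen_anti _ _ (by omega))

theorem IsHorizontalStrip.shiftedRowLens_mem_interlacingBox {ν μ : YoungDiagram}
    (h : IsHorizontalStrip ν μ) (k : ℕ) :
    shiftedRowLens k ν ∈ interlacingBox (shiftedRowLens (k + 1) μ) := by
  refine mem_interlacingBox.mpr fun i => ?_
  obtain ⟨hlo, hhi⟩ := h.rowLen_le (k - 1 - i)
  have e1 : k + 1 - 1 - (i : ℕ) = k - 1 - i + 1 := by omega
  have e2 : k + 1 - 1 - ((i : ℕ) + 1) = k - 1 - i := by omega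
  simp only [shiftedRowLens, e1, e2, Fin.val_succ, Fin.val_castSucc]
  omega

theorem eq_of_shiftedRowLens_eq {k : ℕ} {μ ν : YoungDiagram} (hμ : μ.rowLen k = 0)
    (hν : ν.rowLen k = 0) (h : shiftedRowLens k μ = shiftedRowLens k ν) : μ = ν := by
  refine ext_of_rowLen fun i => ?_
  rcases lt_or_ge i k with hi | hi
  · have := congrFun h ⟨k - 1 - i, by omega⟩
    simp only [shiftedRowLens, Nat.sub_sub_self (by omega : i ≤ k - 1)] at this
    omega
  · have := μ.rowLen_anti k i hi
    have := ν.rowLen_anti k i hi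
    omega

/-- The cells lying above another cell of `μ` are kept anyway when `μ.rowLen (i + 1) ≤ g i`;
keeping them unconditionally makes the result a Young diagram for every `g`. -/
def trimRows (μ : YoungDiagram) (g : ℕ → ℕ) : YoungDiagram where
  cells := μ.cells.filter fun c => (c.1 + 1, c.2) ∈ μ ∨ c.2 < g c.1
  isLowerSet := by
    rintro ⟨i', j'⟩ ⟨i, j⟩ hle hmem
    obtain ⟨hi, hj⟩ := Prod.mk_le_mk.mp hle
    simp only [coe_filter, mem_cells, Set.mem_ofPred_eq] at hmem ⊢
    refine ⟨μ.up_left_mem hi hj hmem.1, ?_⟩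
    rcases hmem.2 with h | h
    · exact Or.inl (μ.up_left_mem (by omega) hj h)
    · rcases hi.lt_or_eq with hi | rfl
      · exact Or.inl (μ.up_left_mem hi hj hmem.1)
      · exact Or.inr (by omega)

theorem mem_trimRows {μ : YoungDiagram} {g : ℕ → ℕ} {i j : ℕ} :
    (i, j) ∈ μ.trimRows g ↔ (i, j) ∈ μ ∧ ((i + 1, j) ∈ μ ∨ j < g i) := by
  change (i, j) ∈ μ.cells.filter _ ↔ _
  simp

theorem isHorizontalStrip_trimRows (μ : YoungDiagram) (g : ℕ → ℕ) :
    IsHorizontalStrip (μ.trimRows g) μ :=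
  ⟨fun _ h => (mem_trimRows.mp h).1, fun i _ h =>
    mem_trimRows.mpr ⟨μ.up_left_mem (Nat.le_succ i) le_rfl h, Or.inl h⟩⟩

theorem rowLen_trimRows {μ : YoungDiagram} {g : ℕ → ℕ} {i : ℕ} (hlo : μ.rowLen (i + 1) ≤ g i)
    (hhi : g i ≤ μ.rowLen i) : (μ.trimRows g).rowLen i = g i :=
  rowLen_eq_of_forall_mem_iff fun j => by
    rw [mem_trimRows, mem_iff_lt_rowLen, mem_iff_lt_rowLen]
    omega

def ofShiftedRowLens (μ : YoungDiagram) {k : ℕ} (m : Fin k → ℕ) : YoungDiagram :=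
  μ.trimRows fun i => if h : i < k then m ⟨k - 1 - i, by omega⟩ - (k - 1 - i) else 0

theorem shiftedRowLens_ofShiftedRowLens {μ : YoungDiagram} {k : ℕ} {m : Fin k → ℕ}
    (hm : m ∈ interlacingBox (shiftedRowLens (k + 1) μ)) :
    shiftedRowLens k (μ.ofShiftedRowLens m) = m := by
  funext i
  obtain ⟨hlo, hhi⟩ := mem_interlacingBox.mp hm i
  have e1 : k + 1 - 1 - (i : ℕ) = k - 1 - i + 1 := by omega
  have e2 : k + 1 - 1 - ((i : ℕ) + 1) = k - 1 - i := by omega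
  simp only [shiftedRowLens, e1, e2, Fin.val_succ, Fin.val_castSucc] at hlo hhi
  have hi : (⟨k - 1 - (k - 1 - i), by omega⟩ : Fin k) = i := Fin.ext (by simp; omega)
  simp only [shiftedRowLens, ofShiftedRowLens]
  rw [rowLen_trimRows] <;> simp only [dif_pos (by omega : k - 1 - (i : ℕ) < k), hi] <;> omega

theorem rowLen_ofShiftedRowLens {μ : YoungDiagram} {k : ℕ} (hμ : μ.rowLen (k + 1) = 0)
    (m : Fin k → ℕ) : (μ.ofShiftedRowLens m).rowLen k = 0 :=
  rowLen_eq_of_forall_mem_iff fun j => by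
    rw [ofShiftedRowLens, mem_trimRows, mem_iff_lt_rowLen, mem_iff_lt_rowLen, hμ,
      dif_neg (lt_irrefl k)]
    omega

end YoungDiagram

theorem Set.ncard_eq_sum_ncard_fiber {α β : Type*} {s : Set α} (hs : s.Finite)
    {t : Finset β} {f : α → β} (hf : Set.MapsTo f s t) :
    s.ncard = ∑ b ∈ t, {a ∈ s | f a = b}.ncard := by
  classical
  rw [Set.ncard_eq_toFinset_card s hs, card_eq_sum_card_fiberwise (by simpa using hf)]
  refine sum_congr rfl fun b _ => ?_
  rw [Set.ncard_eq_toFinset_card _ (hs.subset fun a ha => ha.1)]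
  congr 1
  ext a
  simp

namespace SemistandardYoungTableau

open YoungDiagram

variable {μ ν : YoungDiagram}

theorem lt_entry {K : ℕ} {T : SemistandardYoungTableau μ} (hT : T ∈ ssytSet μ K) {i j : ℕ}
    (h : (i, j) ∈ μ) : i < T i j := by
  induction i with
  | zero => exact (hT 0 j h).1
  | succ i ih =>
    have := T.col_strict (lt_add_one i) h
    have := ih (μ.up_left_mem (Nat.le_succ i) le_rfl h)
    omega

def shapeLE (T : SemistandardYoungTableau μ) (k : ℕ) : YoungDiagram where
  cells := μ.cells.filter fun c => T c.1 c.2 ≤ k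
  isLowerSet := by
    rintro ⟨i', j'⟩ ⟨i, j⟩ hle hmem
    obtain ⟨hi, hj⟩ := Prod.mk_le_mk.mp hle
    simp only [coe_filter, mem_cells, Set.mem_ofPred_eq] at hmem ⊢
    refine ⟨μ.up_left_mem hi hj hmem.1, ?_⟩
    calc T i j ≤ T i j' := T.row_weak_of_le hj (μ.up_left_mem hi le_rfl hmem.1)
      _ ≤ T i' j' := T.col_weak hi hmem.1
      _ ≤ k := hmem.2

theorem mem_shapeLE {T : SemistandardYoungTableau μ} {k i j : ℕ} :
    (i, j) ∈ T.shapeLE k ↔ (i, j) ∈ μ ∧ T i j ≤ k := by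
  change (i, j) ∈ μ.cells.filter _ ↔ _
  simp

theorem isHorizontalStrip_shapeLE {k : ℕ} {T : SemistandardYoungTableau μ}
    (hT : T ∈ ssytSet μ (k + 1)) : IsHorizontalStrip (T.shapeLE k) μ := by
  refine ⟨fun _ h => (mem_shapeLE.mp h).1, fun i j h => mem_shapeLE.mpr ⟨?_, ?_⟩⟩
  · exact μ.up_left_mem (Nat.le_succ i) le_rfl h
  · have := T.col_strict (lt_add_one i) h
    have := (hT _ _ h).2
    omega

theorem rowLen_shapeLE {K : ℕ} {T : SemistandardYoungTableau μ} (hT : T ∈ ssytSet μ K)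
    (k : ℕ) : (T.shapeLE k).rowLen k = 0 :=
  rowLen_eq_of_forall_mem_iff fun j => by
    simp only [mem_shapeLE, Nat.not_lt_zero, iff_false, not_and, not_le]
    exact fun h => lt_entry hT h

def restrict (T : SemistandardYoungTableau μ) (h : ν ≤ μ) : SemistandardYoungTableau ν where
  entry i j := if (i, j) ∈ ν then T i j else 0
  row_weak' hj hcell := by
    rw [if_pos hcell, if_pos (ν.up_left_mem le_rfl hj.le hcell)]
    exact T.row_weak hj (h hcell)
  col_strict' hi hcell := by
    rw [if_pos hcell, if_pos (ν.up_left_mem hi.le le_rfl hcell)]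
    exact T.col_strict hi (h hcell)
  zeros' hcell := if_neg hcell

theorem restrict_apply (T : SemistandardYoungTableau μ) (h : ν ≤ μ) (i j : ℕ) :
    T.restrict h i j = if (i, j) ∈ ν then T i j else 0 := rfl

def extendStrip (T : SemistandardYoungTableau ν) (h : IsHorizontalStrip ν μ) {k : ℕ}
    (hT : ∀ i j, (i, j) ∈ ν → T i j ≤ k) : SemistandardYoungTableau μ where
  entry i j := if (i, j) ∈ ν then T i j else if (i, j) ∈ μ then k + 1 else 0
  row_weak' {i j₁ j₂} hj hcell := by
    by_cases h₂ : (i, j₂) ∈ ν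
    · rw [if_pos h₂, if_pos (ν.up_left_mem le_rfl hj.le h₂)]
      exact T.row_weak hj h₂
    · rw [if_neg h₂, if_pos hcell]
      split_ifs with h₁
      exacts [(hT i j₁ h₁).trans (Nat.le_succ k), le_rfl, Nat.zero_le _]
  col_strict' {i₁ i₂ j} hi hcell := by
    have h₁ : (i₁, j) ∈ ν := by
      obtain ⟨i, rfl⟩ := Nat.exists_eq_add_of_lt hi
      exact ν.up_left_mem (by omega) le_rfl (h.2 _ _ hcell)
    rw [if_pos h₁]
    split_ifs with h₂
    · exact T.col_strict hi h₂
    · exact Nat.lt_succ_of_le (hT i₁ j h₁)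
  zeros' hcell := by rw [if_neg fun h' => hcell (h.1 h'), if_neg hcell]

theorem extendStrip_apply (T : SemistandardYoungTableau ν) (h : IsHorizontalStrip ν μ) {k : ℕ}
    (hT : ∀ i j, (i, j) ∈ ν → T i j ≤ k) (i j : ℕ) :
    T.extendStrip h hT i j = if (i, j) ∈ ν then T i j else if (i, j) ∈ μ then k + 1 else 0 :=
  rfl

end SemistandardYoungTableau

open YoungDiagram SemistandardYoungTableau

theorem ssytSet_finite (μ : YoungDiagram) (K : ℕ) : (ssytSet μ K).Finite := by
  have hinj : Set.InjOn (fun T (c : μ.cells) =>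
      (⟨min (T c.1.1 c.1.2) K, by omega⟩ : Fin (K + 1))) (ssytSet μ K) := by
    intro T₁ h₁ T₂ h₂ heq
    ext i j
    by_cases hc : (i, j) ∈ μ
    · have := congrArg Fin.val (congrFun heq ⟨(i, j), hc⟩)
      simpa [min_eq_left (h₁ i j hc).2, min_eq_left (h₂ i j hc).2] using this
    · rw [T₁.zeros hc, T₂.zeros hc]
  exact Set.Finite.of_finite_image (Set.toFinite _) hinj

theorem ssytCount_eq_one_of_rowLen_zero {μ : YoungDiagram} (h : μ.rowLen 0 = 0) (K : ℕ) :
    ssytCount μ K = 1 := by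
  have hμ : ∀ i j, (i, j) ∉ μ := fun i j hij => by
    have := mem_iff_lt_rowLen.mp (μ.up_left_mem (Nat.zero_le i) (Nat.zero_le j) hij)
    omega
  refine Set.ncard_eq_one.mpr
    ⟨highestWeight μ, Set.ext fun T => ⟨fun _ => ?_, fun _ i j hij => ?_⟩⟩
  · exact SemistandardYoungTableau.ext fun i j => by
      rw [T.zeros (hμ i j), (highestWeight μ).zeros (hμ i j)]
  · exact absurd hij (hμ i j)

/-- Restriction to `ν` is a bijection: the cells of `μ / ν` must all hold `k + 1`. -/
theorem ncard_setOf_shapeLE_eq {ν μ : YoungDiagram} (h : IsHorizontalStrip ν μ) (k : ℕ) :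
    {T ∈ ssytSet μ (k + 1) | T.shapeLE k = ν}.ncard = ssytCount ν k := by
  have top_of_notMem {T : SemistandardYoungTableau μ} (hT : T ∈ ssytSet μ (k + 1))
      (hν : T.shapeLE k = ν) {i j : ℕ} (hμ : (i, j) ∈ μ) (hi : (i, j) ∉ ν) : T i j = k + 1 := by
    have := (hT i j hμ).2
    by_contra hne
    exact hi (hν ▸ mem_shapeLE.mpr ⟨hμ, by omega⟩)
  refine Set.ncard_congr (fun T _ => T.restrict h.1) ?_ ?_ ?_
  · rintro T ⟨hT, rfl⟩ i j hij
    rw [restrict_apply, if_pos hij]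
    exact ⟨(hT i j (mem_shapeLE.mp hij).1).1, (mem_shapeLE.mp hij).2⟩
  · rintro T₁ T₂ ⟨hT₁, hν₁⟩ ⟨hT₂, hν₂⟩ heq
    refine SemistandardYoungTableau.ext fun i j => ?_
    by_cases hν : (i, j) ∈ ν
    · simpa [restrict_apply, hν] using congrArg (fun T => T i j) heq
    by_cases hμ : (i, j) ∈ μ
    · rw [top_of_notMem hT₁ hν₁ hμ hν, top_of_notMem hT₂ hν₂ hμ hν]
    · rw [T₁.zeros hμ, T₂.zeros hμ]
  · intro T hT
    have hle : ∀ i j, (i, j) ∈ ν → T i j ≤ k := fun i j hij => (hT i j hij).2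
    refine ⟨T.extendStrip h hle, ⟨fun i j hij => ?_, ?_⟩, ?_⟩
    · rw [extendStrip_apply]
      split_ifs with hν
      exacts [⟨(hT i j hν).1, (hle i j hν).trans (Nat.le_succ k)⟩, ⟨by omega, le_rfl⟩]
    · refine SetLike.ext fun ⟨i, j⟩ => ?_
      rw [mem_shapeLE, extendStrip_apply]
      by_cases hν : (i, j) ∈ ν
      · simpa [hν] using ⟨h.1 hν, hle i j hν⟩
      · by_cases hμ : (i, j) ∈ μ <;> simp [hν, hμ]
    · refine SemistandardYoungTableau.ext fun i j => ?_
      rw [restrict_apply, extendStrip_apply]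
      split_ifs with hν
      exacts [rfl, (T.zeros hν).symm]

/-- The branching rule: the entries `≤ k` fill a shape `ν` with `μ / ν` a horizontal strip, that
is, with shifted row lengths interlacing those of `μ`. -/
theorem ssytCount_succ {μ : YoungDiagram} {k : ℕ} (hμ : μ.rowLen (k + 1) = 0) :
    ssytCount μ (k + 1) = ∑ m ∈ interlacingBox (shiftedRowLens (k + 1) μ),
      ssytCount (μ.ofShiftedRowLens m) k := by
  rw [ssytCount, Set.ncard_eq_sum_ncard_fiber (ssytSet_finite μ (k + 1))
    (f := fun T => shiftedRowLens k (T.shapeLE k))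
    fun T hT => (isHorizontalStrip_shapeLE hT).shiftedRowLens_mem_interlacingBox k]
  refine sum_congr rfl fun m hm => ?_
  rw [← ncard_setOf_shapeLE_eq (ν := μ.ofShiftedRowLens m)
    (isHorizontalStrip_trimRows μ _) k]
  congr 1
  refine Set.ext fun T => and_congr_right fun hT => ⟨fun h => ?_, fun h => ?_⟩
  · refine eq_of_shiftedRowLens_eq (rowLen_shapeLE hT k) (rowLen_ofShiftedRowLens hμ m) ?_
    exact h.trans (shiftedRowLens_ofShiftedRowLens hm).symm
  · rw [h, shiftedRowLens_ofShiftedRowLens hm]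

theorem prod_factorial_mul_ssytCount (k : ℕ) (μ : YoungDiagram) (hμ : μ.rowLen k = 0) :
    (∏ t ∈ range k, (t.factorial : ℚ)) * ssytCount μ k =
      det (vandermonde fun i => (shiftedRowLens k μ i : ℚ)) := by
  induction k generalizing μ with
  | zero => simp [ssytCount_eq_one_of_rowLen_zero hμ]
  | succ k ih =>
    calc (∏ t ∈ range (k + 1), (t.factorial : ℚ)) * ssytCount μ (k + 1)
        = k.factorial * ∑ m ∈ interlacingBox (shiftedRowLens (k + 1) μ),
            (∏ t ∈ range k, (t.factorial : ℚ)) * ssytCount (μ.ofShiftedRowLens m) k := by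
          rw [ssytCount_succ hμ, prod_range_succ, Nat.cast_sum, mul_sum, mul_sum]
          exact sum_congr rfl fun _ _ => by ring
      _ = k.factorial * ∑ m ∈ interlacingBox (shiftedRowLens (k + 1) μ),
            det (vandermonde fun i => (m i : ℚ)) := by
          refine congrArg _ (sum_congr rfl fun m hm => ?_)
          rw [ih _ (rowLen_ofShiftedRowLens hμ m), shiftedRowLens_ofShiftedRowLens hm]
      _ = _ := factorial_mul_sum_det_vandermonde (shiftedRowLens_monotone _ _)

theorem Matrix.det_vandermonde_eq_prod_range {R : Type*} [CommRing R] (f : ℕ → R) (N : ℕ) :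
    det (vandermonde fun i : Fin N => f i) = ∏ j ∈ range N, ∏ i ∈ range j, (f j - f i) := by
  rw [det_vandermonde, prod_comm' (t' := univ) (s' := fun j => Iio j) (by simp),
    ← Fin.prod_univ_eq_prod_range (fun j => ∏ i ∈ range j, (f j - f i))]
  refine prod_congr rfl fun j _ => ?_
  rw [← Nat.Iio_eq_range, ← Fin.map_valEmbedding_Iio, prod_map]
  rfl

def nthNotTwoModThree (t : ℕ) : ℕ := 3 * (t / 2) + t % 2

theorem nthNotTwoModThree_two_mul (N : ℕ) : nthNotTwoModThree (2 * N) = 3 * N := by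
  unfold nthNotTwoModThree
  omega

theorem nthNotTwoModThree_two_mul_add_one (N : ℕ) :
    nthNotTwoModThree (2 * N + 1) = 3 * N + 1 := by
  unfold nthNotTwoModThree
  omega

theorem nthNotTwoModThree_strictMono : StrictMono nthNotTwoModThree :=
  strictMono_nat_of_lt_succ fun t => by unfold nthNotTwoModThree; omega

theorem prod_range_two_mul_nthNotTwoModThree (f : ℕ → ℕ) (N : ℕ) :
    ∏ i ∈ range (2 * N), f (nthNotTwoModThree i) = ∏ b ∈ range N, f (3 * b) * f (3 * b + 1) := by
  induction N with
  | zero => simp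
  | succ N ih =>
    rw [mul_add_one, prod_range_succ, prod_range_succ, ih, nthNotTwoModThree_two_mul,
      nthNotTwoModThree_two_mul_add_one, prod_range_succ, mul_assoc]

theorem factorial_three_mul (m : ℕ) :
    (3 * m).factorial = ∏ c ∈ range m, (3 * c + 1) * (3 * c + 2) * (3 * c + 3) := by
  induction m with
  | zero => simp
  | succ m ih =>
    rw [prod_range_succ, ← ih, show 3 * (m + 1) = 3 * m + 2 + 1 by ring, Nat.factorial_succ,
      Nat.factorial_succ, Nat.factorial_succ]
    ring

theorem prod_sub_nthNotTwoModThree_succ (n : ℕ) :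
    (∏ i ∈ range (2 * n + 1), (nthNotTwoModThree (2 * n + 1) - nthNotTwoModThree i)) *
      ∏ i ∈ range (2 * n + 2), (nthNotTwoModThree (2 * n + 2) - nthNotTwoModThree i) =
      3 ^ n * n.factorial * (3 * n + 3).factorial := by
  have hodd : ∏ i ∈ range (2 * n + 1), (3 * n + 1 - nthNotTwoModThree i) =
      ∏ c ∈ range n, (3 * c + 4) * (3 * c + 3) := by
    rw [prod_range_succ, nthNotTwoModThree_two_mul, prod_range_two_mul_nthNotTwoModThree,
      ← prod_range_reflect, show 3 * n + 1 - 3 * n = 1 by omega, mul_one]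
    exact prod_congr rfl fun c hc => by
      have := mem_range.mp hc
      congr 1 <;> omega
  have heven : ∏ i ∈ range (2 * (n + 1)), (3 * (n + 1) - nthNotTwoModThree i) =
      ∏ c ∈ range (n + 1), (3 * c + 3) * (3 * c + 2) := by
    rw [prod_range_two_mul_nthNotTwoModThree, ← prod_range_reflect]
    exact prod_congr rfl fun c hc => by
      have := mem_range.mp hc
      congr 1 <;> omega
  have hpow : ∏ c ∈ range n, (3 * c + 3) = 3 ^ n * n.factorial := by
    rw [← prod_range_add_one_eq_factorial, pow_eq_prod_const, ← prod_mul_distrib]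
    exact prod_congr rfl fun c _ => by ring
  have hone : ∏ c ∈ range (n + 1), (3 * c + 1) = ∏ c ∈ range n, (3 * c + 4) := by
    rw [prod_range_succ']
    simp [mul_add]
  rw [nthNotTwoModThree_two_mul_add_one, show 2 * n + 2 = 2 * (n + 1) by ring,
    nthNotTwoModThree_two_mul, hodd, heven, ← hpow, show 3 * n + 3 = 3 * (n + 1) by ring,
    factorial_three_mul]
  simp only [prod_mul_distrib]
  rw [hone]
  ring

theorem prod_sub_nthNotTwoModThree (n : ℕ) :
    ∏ j ∈ range (2 * n + 1), ∏ i ∈ range j, (nthNotTwoModThree j - nthNotTwoModThree i) =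
      3 ^ (n * (n - 1) / 2) * (∏ a ∈ range n, a.factorial) *
        ∏ i ∈ range (n + 1), (3 * i).factorial := by
  induction n with
  | zero => simp
  | succ n ih =>
    rw [show 2 * (n + 1) + 1 = 2 * n + 1 + 1 + 1 by ring, prod_range_succ, prod_range_succ, ih,
      mul_assoc _ (∏ i ∈ range (2 * n + 1), _), prod_sub_nthNotTwoModThree_succ,
      Nat.triangle_succ, prod_range_succ (fun a => a.factorial) n,
      prod_range_succ (fun i => (3 * i).factorial) (n + 1), pow_add, mul_add_one 3 n]
    ring

theorem prod_range_factorial_two_mul_add_one (n : ℕ) :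
    ∏ t ∈ range (2 * n + 1), t.factorial =
      (∏ a ∈ range n, a.factorial) * ∏ i ∈ range (n + 1), (n + i).factorial := by
  rw [show 2 * n + 1 = n + (n + 1) by ring, prod_range_add]

theorem mem_lambdaShape {n i j : ℕ} : (i, j) ∈ lambdaShape n ↔ j < n - (i + 1) / 2 := by
  change (i, j) ∈ Finset.filter _ _ ↔ _
  simp only [mem_filter, mem_product, mem_range, and_iff_right_iff_imp]
  omega

theorem rowLen_lambdaShape (n i : ℕ) : (lambdaShape n).rowLen i = n - (i + 1) / 2 :=
  rowLen_eq_of_forall_mem_iff fun _ => mem_lambdaShape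

theorem shiftedRowLens_lambdaShape (n : ℕ) :
    shiftedRowLens (2 * n + 1) (lambdaShape n) =
      fun i : Fin (2 * n + 1) => nthNotTwoModThree i := by
  funext i
  have := i.isLt
  simp only [shiftedRowLens, rowLen_lambdaShape, nthNotTwoModThree]
  omega

theorem prod_factorial_mul_ssytCount_lambdaShape (n : ℕ) :
    (∏ t ∈ range (2 * n + 1), t.factorial) * ssytCount (lambdaShape n) (2 * n + 1) =
      3 ^ (n * (n - 1) / 2) * (∏ a ∈ range n, a.factorial) *
        ∏ i ∈ range (n + 1), (3 * i).factorial := by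
  have hdet := prod_factorial_mul_ssytCount (2 * n + 1) (lambdaShape n)
    (by rw [rowLen_lambdaShape]; omega)
  rw [shiftedRowLens_lambdaShape,
    det_vandermonde_eq_prod_range (fun t => (nthNotTwoModThree t : ℚ))] at hdet
  rw [← prod_sub_nthNotTwoModThree]
  have hcast : ((∏ j ∈ range (2 * n + 1), ∏ i ∈ range j,
      (nthNotTwoModThree j - nthNotTwoModThree i) : ℕ) : ℚ) =
      ∏ j ∈ range (2 * n + 1), ∏ i ∈ range j,
        ((nthNotTwoModThree j : ℚ) - nthNotTwoModThree i) := by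
    push_cast [prod_congr rfl fun j _ => prod_congr rfl fun i hi =>
      Nat.cast_sub (R := ℚ) (nthNotTwoModThree_strictMono (mem_range.mp hi)).le]
    rfl
  exact_mod_cast hdet.trans hcast.symm

theorem ssyt_staircase_count_general (n : ℕ) :
    ssytCount (lambdaShape n) (2*n+1) * ∏ i ∈ Finset.range (n+1), (n + i).factorial =
      3 ^ (n * (n - 1) / 2) * ∏ i ∈ Finset.range (n+1), (3 * i).factorial := by
  have h := prod_factorial_mul_ssytCount_lambdaShape n
  rw [prod_range_factorial_two_mul_add_one] at h
  have hpos : 0 < ∏ a ∈ range n, a.factorial := prod_pos fun a _ => a.factorial_pos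
  apply Nat.eq_of_mul_eq_mul_left hpos
  linarith

/-- The number of semistandard Young tableaux of shape `(n, n-1, n-1, …, 2, 2, 1, 1)` with
entries from `{1, …, 2n+1}` equals `3^{n(n-1)/2} · ∏_{i=0}^{n} (3i)!/(n+i)!`. -/
theorem ssyt_staircase_count (n : ℕ) (hn : 1 ≤ n) :
    ssytCount (lambdaShape n) (2*n+1) * ∏ i ∈ Finset.range (n+1), (n + i).factorial =
      3 ^ (n * (n - 1) / 2) * ∏ i ∈ Finset.range (n+1), (3 * i).factorial :=
  ssyt_staircase_count_general n
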